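/- arXiv:2402.12235 — 2 statements merged into one kernel-verified Lean document; each statement's English description precedes it below -/
import Mathlib

section
/- Conditional maximal leakage reduces to unconditional maximal leakage under a strictly positive posterior: if Y − X − Z is a Markov chain of finite random variables, and P_{Y|X}(y|x) > 0 for all x ∈ 𝕏 and y ∈ 𝕐 (with P_X strictly positive), then L(X → Z | Y) = L(X → Z), where L(X → Z | Y) = log(max_y ∑_z max_{x ∈ supp(X|Y=y)} P_{Z|X,Y}(z|x,y)) and L(X → Z) = log(∑_z max_x P_{Z|X}(z|x)). -/
open scoped BigOperators
noncomputable section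

/-- A joint pmf on a triple of finite alphabets (indexed x, y, z). -/
def IsJointPMF3 {X Y Z : Type} [Fintype X] [Fintype Y] [Fintype Z] (r : X → Y → Z → ℝ) : Prop :=
  (∀ x y z, 0 ≤ r x y z) ∧ ∑ x, ∑ y, ∑ z, r x y z = 1

/-- Markov chain Y − X − Z: Y and Z are conditionally independent given X. -/
def MarkovYXZ {X Y Z : Type} [Fintype Y] [Fintype Z] (r : X → Y → Z → ℝ) : Prop :=
  ∀ x y z, r x y z * (∑ y', ∑ z', r x y' z') = (∑ z', r x y z') * (∑ y', r x y' z)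

/-- Conditional maximal leakage, closed form:
L(X → Z | Y) = log₂(max_y ∑_z max_{x ∈ supp(X|Y=y)} P_{Z|X,Y}(z|x,y)),
where supp(X|Y=y) = {x : P_{X,Y}(x,y) > 0}. -/
def condMaxLeak {X Y Z : Type} [Fintype X] [Fintype Y] [Fintype Z] [Nonempty X] [Nonempty Y]
    (r : X → Y → Z → ℝ) : ℝ :=
  Real.logb 2 (Finset.univ.sup' Finset.univ_nonempty fun y =>
    ∑ z, Finset.univ.sup' Finset.univ_nonempty fun x =>
      if 0 < ∑ z', r x y z' then r x y z / ∑ z', r x y z' else 0)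

/-- Closed form of maximal leakage: L(X → Z) = log₂(∑_z max_x P_{Z|X}(z|x)). -/
def maxLeak {X Z : Type} [Fintype X] [Fintype Z] [Nonempty X] (p : X → Z → ℝ) : ℝ :=
  Real.logb 2 (∑ z, Finset.univ.sup' Finset.univ_nonempty fun x => p x z / ∑ z', p x z')

/-- The Markov property in conditional form: `P_{Z|X,Y}(z|x,y) = P_{Z|X}(z|x)`. -/
theorem MarkovYXZ.div_sum_eq {X Y Z : Type} [Fintype Y] [Fintype Z] {r : X → Y → Z → ℝ}
    (hmc : MarkovYXZ r) {x : X} {y : Y} (z : Z) (hxy : ∑ z', r x y z' ≠ 0)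
    (hx : ∑ y', ∑ z', r x y' z' ≠ 0) :
    r x y z / ∑ z', r x y z' = (∑ y', r x y' z) / ∑ z', ∑ y', r x y' z' := by
  rw [Finset.sum_comm (f := fun z' y' => r x y' z'), div_eq_div_iff hxy hx, hmc x y z, mul_comm]

theorem condMaxLeak_eq_maxLeak {X Y Z : Type} [Fintype X] [Fintype Y] [Fintype Z] [Nonempty X]
    [Nonempty Y] {r : X → Y → Z → ℝ} {p : X → Z → ℝ} (hpos : ∀ x y, 0 < ∑ z, r x y z)
    (hcond : ∀ x y z, r x y z / ∑ z', r x y z' = p x z / ∑ z', p x z') :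
    condMaxLeak r = maxLeak p := by
  simp only [condMaxLeak, maxLeak, hpos, if_true, hcond, Finset.sup'_const]

theorem cond_maximal_leakage_eq_maximal_leakage_general
    {X Y Z : Type} [Fintype X] [Fintype Y] [Fintype Z] [Nonempty X] [Nonempty Y]
    (r : X → Y → Z → ℝ) (hmc : MarkovYXZ r)
    (hX : ∀ x, 0 < ∑ y, ∑ z, r x y z)
    (hpos : ∀ x y, 0 < (∑ z, r x y z) / (∑ y', ∑ z', r x y' z')) :
    condMaxLeak r = maxLeak (fun x z => ∑ y, r x y z) := by
  have hxy : ∀ x y, 0 < ∑ z, r x y z := fun x y =>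
    (div_pos_iff_of_pos_right (hX x)).mp (hpos x y)
  exact condMaxLeak_eq_maxLeak hxy fun x y z => hmc.div_sum_eq z (hxy x y).ne' (hX x).ne'

/-- under a strictly positive posterior P_{Y|X} (and strictly positive P_X),
for a Markov chain Y − X − Z, conditional maximal leakage equals unconditional maximal
leakage: L(X → Z | Y) = L(X → Z). -/
theorem cond_maximal_leakage_eq_maximal_leakage
    {X Y Z : Type} [Fintype X] [Fintype Y] [Fintype Z] [Nonempty X] [Nonempty Y] [Nonempty Z]
    (r : X → Y → Z → ℝ) (hr : IsJointPMF3 r) (hmc : MarkovYXZ r)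
    (hcardX : 1 < Fintype.card X) (hcardY : 1 < Fintype.card Y)
    (hX : ∀ x, 0 < ∑ y, ∑ z, r x y z)
    (hpos : ∀ x y, 0 < (∑ z, r x y z) / (∑ y', ∑ z', r x y' z')) :
    condMaxLeak r = maxLeak (fun x z => ∑ y, r x y z) :=
  cond_maximal_leakage_eq_maximal_leakage_general r hmc hX hpos
end
end

section
/- If the posterior is strictly positive and the support of X given Y = y equals the full support of X for every y, then for a Markov chain Y − X − Z, the chain X − Y − Z holds (i.e., X ⟂ Z | Y) if and only if Z is independent of X. -/
/-!
Write `p` for the marginals of `r`. Under `Y − X − Z` and a positive posterior, every `x` with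
`p(x) > 0` has `p(x,y) > 0` for all `y`, so the two Markov identities
`p(x,y,z) p(x) = p(x,y) p(x,z)` and `p(x,y,z) p(y) = p(x,y) p(y,z)` can be divided by `p(x,y)`,
giving `p(x,z) p(y) = p(y,z) p(x)`. Summing over `x` gives `Z ⟂ Y`, and substituting back at a
`y` with `p(y) > 0` gives `Z ⟂ X`. Conversely, `Z ⟂ X` and `Y − X − Z` give `Z ⟂ (X, Y)`,
from which `X − Y − Z` is immediate.
-/

open scoped BigOperators
noncomputable section

open Finset

section Marginals

variable {X Y Z : Type} [Fintype Z]

def margXY (r : X → Y → Z → ℝ) (x : X) (y : Y) : ℝ := ∑ z, r x y z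

section

variable [Fintype Y]

def margX (r : X → Y → Z → ℝ) (x : X) : ℝ := ∑ y, ∑ z, r x y z

def margXZ (r : X → Y → Z → ℝ) (x : X) (z : Z) : ℝ := ∑ y, r x y z

def PosteriorPos (r : X → Y → Z → ℝ) : Prop :=
  ∀ x y, 0 < margX r x → 0 < margXY r x y / margX r x

lemma margX_nonneg {r : X → Y → Z → ℝ} (hr : ∀ x y z, 0 ≤ r x y z) (x : X) :
    0 ≤ margX r x :=
  sum_nonneg fun y _ => sum_nonneg fun z _ => hr x y z

lemma eq_zero_of_margX_eq_zero {r : X → Y → Z → ℝ} (hr : ∀ x y z, 0 ≤ r x y z) {x : X}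
    (hx : margX r x = 0) (y : Y) (z : Z) : r x y z = 0 := by
  have hxy := (sum_eq_zero_iff_of_nonneg fun y _ => sum_nonneg fun z _ => hr x y z).mp hx y
    (mem_univ y)
  exact (sum_eq_zero_iff_of_nonneg fun z _ => hr x y z).mp hxy z (mem_univ z)

lemma MarkovYXZ.mul_margX {r : X → Y → Z → ℝ} (hmc : MarkovYXZ r) (x : X) (y : Y) (z : Z) :
    r x y z * margX r x = margXY r x y * margXZ r x z :=
  hmc x y z

lemma PosteriorPos.margXY_pos {r : X → Y → Z → ℝ} (hpos : PosteriorPos r) {x : X}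
    (hx : 0 < margX r x) (y : Y) : 0 < margXY r x y :=
  (div_pos_iff_of_pos_right hx).mp (hpos x y hx)

end

variable [Fintype X]

def margY (r : X → Y → Z → ℝ) (y : Y) : ℝ := ∑ x, ∑ z, r x y z

def margYZ (r : X → Y → Z → ℝ) (y : Y) (z : Z) : ℝ := ∑ x, r x y z

def MarkovXYZ (r : X → Y → Z → ℝ) : Prop :=
  ∀ x y z, r x y z * margY r y = margXY r x y * margYZ r y z

lemma markovXYZ_of_eq_margXY_mul {r : X → Y → Z → ℝ} {g : Z → ℝ}
    (h : ∀ x y z, r x y z = margXY r x y * g z) : MarkovXYZ r := by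
  intro x y z
  have hyz : margYZ r y z = margY r y * g z :=
    (sum_congr rfl fun x _ => h x y z).trans (sum_mul ..).symm
  rw [h, hyz]
  ring

variable [Fintype Y]

def margZ (r : X → Y → Z → ℝ) (z : Z) : ℝ := ∑ x, ∑ y, r x y z

def IndepXZ (r : X → Y → Z → ℝ) : Prop :=
  ∀ x z, margXZ r x z = margX r x * margZ r z

variable {r : X → Y → Z → ℝ}

lemma exists_margY_pos (hr : IsJointPMF3 r) : ∃ y, 0 < margY r y := by
  have htotal : ∑ y, margY r y = 1 := by
    rw [← hr.2]
    exact sum_comm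
  simpa using exists_lt_of_sum_lt (s := univ) (f := fun _ => (0 : ℝ)) (g := margY r)
    (by simp [htotal])

lemma margXZ_mul_margY_eq (hr : ∀ x y z, 0 ≤ r x y z) (hmc : MarkovYXZ r)
    (hpos : PosteriorPos r) (hxyz : MarkovXYZ r) (x : X) (y : Y) (z : Z) :
    margXZ r x z * margY r y = margYZ r y z * margX r x := by
  rcases (margX_nonneg hr x).eq_or_lt with hx | hx
  · have hxz : margXZ r x z = 0 :=
      sum_eq_zero fun y' _ => eq_zero_of_margX_eq_zero hr hx.symm y' z
    rw [hxz, ← hx, zero_mul, mul_zero]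
  · refine mul_left_cancel₀ (hpos.margXY_pos hx y).ne' ?_
    linear_combination margX r x * hxyz x y z - margY r y * hmc.mul_margX x y z

lemma margYZ_eq_margZ_mul_margY (hr : IsJointPMF3 r)
    (h : ∀ x y z, margXZ r x z * margY r y = margYZ r y z * margX r x) (y : Y) (z : Z) :
    margYZ r y z = margZ r z * margY r y := by
  have hsum : ∑ x, margXZ r x z * margY r y = ∑ x, margYZ r y z * margX r x :=
    sum_congr rfl fun x _ => h x y z
  have htotal : ∑ x, margX r x = 1 := hr.2
  rw [← sum_mul, ← mul_sum, htotal, mul_one] at hsum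
  exact hsum.symm

lemma indepXZ_of_markovXYZ (hr : IsJointPMF3 r) (hmc : MarkovYXZ r)
    (hpos : PosteriorPos r) (hxyz : MarkovXYZ r) : IndepXZ r := by
  intro x z
  have h := margXZ_mul_margY_eq hr.1 hmc hpos hxyz
  obtain ⟨y, hy⟩ := exists_margY_pos hr
  refine mul_right_cancel₀ hy.ne' ?_
  linear_combination h x y z + margX r x * margYZ_eq_margZ_mul_margY hr h y z

lemma eq_margXY_mul_margZ (hr : ∀ x y z, 0 ≤ r x y z) (hmc : MarkovYXZ r) (hind : IndepXZ r)
    (x : X) (y : Y) (z : Z) : r x y z = margXY r x y * margZ r z := by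
  rcases (margX_nonneg hr x).eq_or_lt with hx | hx
  · have hxy : margXY r x y = 0 :=
      sum_eq_zero fun z' _ => eq_zero_of_margX_eq_zero hr hx.symm y z'
    rw [eq_zero_of_margX_eq_zero hr hx.symm y z, hxy, zero_mul]
  · refine mul_right_cancel₀ hx.ne' ?_
    linear_combination hmc.mul_margX x y z + margXY r x y * hind x z

lemma markovXYZ_iff_indepXZ (hr : IsJointPMF3 r) (hmc : MarkovYXZ r) (hpos : PosteriorPos r) :
    MarkovXYZ r ↔ IndepXZ r :=
  ⟨indepXZ_of_markovXYZ hr hmc hpos,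
    fun hind => markovXYZ_of_eq_margXY_mul (eq_margXY_mul_margZ hr.1 hmc hind)⟩

end Marginals

theorem perfect_lpp_iff_independent_general
    {X Y Z : Type} [Fintype X] [Fintype Y] [Fintype Z]
    (r : X → Y → Z → ℝ) (hr : IsJointPMF3 r) (hmc : MarkovYXZ r)
    (hpos : ∀ x y, 0 < ∑ y', ∑ z', r x y' z' → 0 < (∑ z, r x y z) / (∑ y', ∑ z', r x y' z')) :
    (∀ x y z, r x y z * (∑ x', ∑ z', r x' y z') = (∑ z', r x y z') * (∑ x', r x' y z)) ↔
      (∀ x z, (∑ y, r x y z) = (∑ y, ∑ z', r x y z') * (∑ x', ∑ y, r x' y z)) :=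
  markovXYZ_iff_indepXZ hr hmc hpos

/-- for a Markov chain Y − X − Z with strictly positive posterior and
supp(X|Y=y) = supp(X) for every y, the chain X − Y − Z (X ⟂ Z | Y) holds iff
Z is independent of X. -/
theorem perfect_lpp_iff_independent
    {X Y Z : Type} [Fintype X] [Fintype Y] [Fintype Z] [Nonempty X] [Nonempty Y] [Nonempty Z]
    (r : X → Y → Z → ℝ) (hr : IsJointPMF3 r) (hmc : MarkovYXZ r)
    (hcardY : 1 < Fintype.card Y)
    (hpos : ∀ x y, 0 < ∑ y', ∑ z', r x y' z' → 0 < (∑ z, r x y z) / (∑ y', ∑ z', r x y' z'))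
    (hsupp : ∀ y, {x | 0 < (∑ z, r x y z) / (∑ x', ∑ z, r x' y z)}
                    = {x | 0 < ∑ y', ∑ z', r x y' z'}) :
    (∀ x y z, r x y z * (∑ x', ∑ z', r x' y z') = (∑ z', r x y z') * (∑ x', r x' y z)) ↔
      (∀ x z, (∑ y, r x y z) = (∑ y, ∑ z', r x y z') * (∑ x', ∑ y, r x' y z)) :=
  perfect_lpp_iff_independent_general r hr hmc hpos
end
end
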